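/- If Σ̂_CD(k) = (k/((p²−1)p))·[(pk−1)·Σ̂_x + (p−k)·Tr(Σ̂_x)·I_p] with Σ̂_x positive semidefinite, nonzero, and 1 ≤ k < p, then Σ̂_CD(k) is positive definite (in particular invertible) even when Σ̂_x is singular. -/

import Mathlib

open Matrix

theorem cd_estimator_posDef_general
    (p k : ℕ) (hk1 : 1 ≤ k) (hkp : k < p)
    (Sx : Matrix (Fin p) (Fin p) ℝ) (hSx : Sx.PosSemidef)
    (htr : 0 < Sx.trace) :
    (((k : ℝ) / (((p : ℝ) ^ 2 - 1) * p)) •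
      (((p : ℝ) * k - 1) • Sx + ((p : ℝ) - k) • Sx.trace • (1 : Matrix (Fin p) (Fin p) ℝ))).PosDef := by
  have hk : (1 : ℝ) ≤ k := by exact_mod_cast hk1
  have hkp' : (k : ℝ) < p := by exact_mod_cast hkp
  have hscale : 0 < (k : ℝ) / (((p : ℝ) ^ 2 - 1) * p) :=
    div_pos (by linarith) (mul_pos (by nlinarith) (by linarith))
  have hSx_coeff : 0 ≤ (p : ℝ) * k - 1 := by nlinarith
  have hId_coeff : 0 < (p : ℝ) - k := by linarith
  refine PosDef.smul ?_ hscale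
  exact PosDef.posSemidef_add (hSx.smul hSx_coeff) ((PosDef.one.smul htr).smul hId_coeff)

/-- The CD estimator `(k/((p²−1)p)) • [(pk−1) Σ̂ₓ + (p−k) Tr(Σ̂ₓ) I]` is positive
definite whenever `Σ̂ₓ` is PSD with positive trace and `1 ≤ k < p`. -/
theorem cd_estimator_posDef
    (p k : ℕ) (hp : 2 ≤ p) (hk1 : 1 ≤ k) (hkp : k < p)
    (Sx : Matrix (Fin p) (Fin p) ℝ) (hSx : Sx.PosSemidef)
    (htr : 0 < Sx.trace) :
    (((k : ℝ) / (((p : ℝ) ^ 2 - 1) * p)) •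
      (((p : ℝ) * k - 1) • Sx + ((p : ℝ) - k) • Sx.trace • (1 : Matrix (Fin p) (Fin p) ℝ))).PosDef :=
  cd_estimator_posDef_general p k hk1 hkp Sx hSx htr
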